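/- The optimal-profile constant κ_s := inf{ G₁[v, ℝ] : v measurable with G₁[v, ℝ] < ∞, v(x) → α' as x → −∞, and v(x) → β' as x → +∞ } is strictly positive. -/

import Mathlib

open Real MeasureTheory Set Filter
open scoped ENNReal

/-- The Gagliardo-type double integral ∬_{E×E} |v(x') − v(x)|²/|x' − x|^{1+2s} dx' dx. -/
noncomputable def gag (s : ℝ) (E : Set ℝ) (v : ℝ → ℝ) : ℝ≥0∞ :=
  ∫⁻ x in E, ∫⁻ x' in E, ENNReal.ofReal ((v x' - v x) ^ 2 / |x' - x| ^ (1 + 2 * s))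

/-- The functional G₁[v, ℝ] := (1/D) ∬ |v(x)−v(x')|²/|x−x'|^{1+2s} + ∫ V(v). -/
noncomputable def Gone (D s : ℝ) (V : ℝ → ℝ) (v : ℝ → ℝ) : ℝ≥0∞ :=
  ENNReal.ofReal (1 / D) * gag s univ v + ∫⁻ x, ENNReal.ofReal (V (v x))

/-- The optimal-profile constant
κ_s := inf { G₁[v, ℝ] : v measurable, G₁[v, ℝ] < ∞, v → α' at −∞, v → β' at +∞ }. -/
noncomputable def kappa (D s α' β' : ℝ) (V : ℝ → ℝ) : ℝ≥0∞ :=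
  sInf {t : ℝ≥0∞ | ∃ v : ℝ → ℝ, Measurable v ∧ Gone D s V v ≠ ⊤ ∧
    Tendsto v atBot (nhds α') ∧ Tendsto v atTop (nhds β') ∧ t = Gone D s V v}

/-!
Put `p, q` at one and two thirds of the way from `α'` to `β'`. If `v` spends time at least `1`
in `[p, q]`, the potential term is at least `min_{[p, q]} V > 0`. Otherwise a continuity
argument gives a window `(x₀, x₀ + 3]` in which `{q < v}` has measure exactly `1`, so `{v < p}`
has measure at least `1` there, and every pair of points from these two sets contributes at
least `(q - p)² / 3^(1+2s)` to the Gagliardo integrand.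
-/

lemma ofReal_mul_volume_mul_volume_le_gag {s d L : ℝ} {v : ℝ → ℝ} {A B : Set ℝ}
    (hs : 0 ≤ 1 + 2 * s) (hd : 0 < d) (hA : MeasurableSet A) (hB : MeasurableSet B)
    (hdist : ∀ x ∈ A, ∀ x' ∈ B, |x' - x| ≤ L) (hjump : ∀ x ∈ A, ∀ x' ∈ B, d ≤ |v x' - v x|) :
    ENNReal.ofReal (d ^ 2 / L ^ (1 + 2 * s)) * volume B * volume A ≤ gag s univ v := by
  have hpair : ∀ x ∈ A, ∀ x' ∈ B,
      d ^ 2 / L ^ (1 + 2 * s) ≤ (v x' - v x) ^ 2 / |x' - x| ^ (1 + 2 * s) := by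
    intro x hx x' hx'
    have hne : x' - x ≠ 0 := by
      intro h
      have := hjump x hx x' hx'
      rw [sub_eq_zero.1 h, sub_self, abs_zero] at this
      linarith
    have hpos : 0 < |x' - x| := abs_pos.2 hne
    rw [← sq_abs (v x' - v x)]
    exact div_le_div₀ (sq_nonneg _) (pow_le_pow_left₀ hd.le (hjump x hx x' hx') 2)
      (rpow_pos_of_pos hpos _) (rpow_le_rpow hpos.le (hdist x hx x' hx') hs)
  have hinner : ∀ x ∈ A, ENNReal.ofReal (d ^ 2 / L ^ (1 + 2 * s)) * volume B ≤
      ∫⁻ x', ENNReal.ofReal ((v x' - v x) ^ 2 / |x' - x| ^ (1 + 2 * s)) := by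
    intro x hx
    calc ENNReal.ofReal (d ^ 2 / L ^ (1 + 2 * s)) * volume B
        = ∫⁻ _ in B, ENNReal.ofReal (d ^ 2 / L ^ (1 + 2 * s)) := (setLIntegral_const _ _).symm
      _ ≤ ∫⁻ x' in B, ENNReal.ofReal ((v x' - v x) ^ 2 / |x' - x| ^ (1 + 2 * s)) :=
        setLIntegral_mono' hB fun x' hx' => ENNReal.ofReal_le_ofReal (hpair x hx x' hx')
      _ ≤ _ := setLIntegral_le_lintegral _ _
  calc ENNReal.ofReal (d ^ 2 / L ^ (1 + 2 * s)) * volume B * volume A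
      = ∫⁻ _ in A, ENNReal.ofReal (d ^ 2 / L ^ (1 + 2 * s)) * volume B :=
        (setLIntegral_const _ _).symm
    _ ≤ ∫⁻ x in A, ∫⁻ x', ENNReal.ofReal ((v x' - v x) ^ 2 / |x' - x| ^ (1 + 2 * s)) :=
        setLIntegral_mono' hA hinner
    _ ≤ ∫⁻ x, ∫⁻ x', ENNReal.ofReal ((v x' - v x) ^ 2 / |x' - x| ^ (1 + 2 * s)) :=
        setLIntegral_le_lintegral _ _
    _ = gag s univ v := by simp only [gag, Measure.restrict_univ]

lemma ofReal_mul_volume_preimage_le_lintegral {V v : ℝ → ℝ} (hV : Measurable V)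
    (hv : Measurable v) {K : Set ℝ} {m : ℝ} (hm : ∀ t ∈ K, m ≤ V t) :
    ENNReal.ofReal m * volume (v ⁻¹' K) ≤ ∫⁻ x, ENNReal.ofReal (V (v x)) :=
  calc ENNReal.ofReal m * volume (v ⁻¹' K)
      ≤ ENNReal.ofReal m * volume {x | ENNReal.ofReal m ≤ ENNReal.ofReal (V (v x))} :=
        by gcongr; exact fun x hx => ENNReal.ofReal_le_ofReal (hm _ hx)
    _ ≤ _ := mul_meas_ge_le_lintegral₀ (hV.comp hv).ennreal_ofReal.aemeasurable _

lemma continuous_volumeReal_inter_Ioc {S : Set ℝ} (hS : MeasurableSet S) {L : ℝ} (hL : 0 ≤ L) :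
    Continuous fun x => volume.real (S ∩ Ioc x (x + L)) := by
  have hint (a b : ℝ) : IntervalIntegrable (S.indicator 1) volume a b :=
    intervalIntegrable_iff.2 <|
      (integrableOn_const (C := (1 : ℝ)) measure_Ioc_lt_top.ne).indicator hS
  have hwindow (x : ℝ) : volume.real (S ∩ Ioc x (x + L)) =
      (∫ t in (0 : ℝ)..x + L, S.indicator 1 t) - ∫ t in (0 : ℝ)..x, S.indicator 1 t := by
    rw [intervalIntegral.integral_interval_sub_left (hint _ _) (hint _ _),
      intervalIntegral.integral_of_le (by linarith), integral_indicator_one hS,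
      measureReal_restrict_apply hS]
  simp_rw [hwindow]
  have hprim := intervalIntegral.continuous_primitive hint 0
  exact (hprim.comp (continuous_add_const L)).sub hprim

lemma exists_volume_inter_Ioc_eq {S : Set ℝ} (hS : MeasurableSet S) {L m : ℝ}
    (hm : m ∈ Icc 0 L) (hbot : ∀ᶠ x in atBot, x ∉ S) (htop : ∀ᶠ x in atTop, x ∈ S) :
    ∃ x₀, volume (S ∩ Ioc x₀ (x₀ + L)) = ENNReal.ofReal m := by
  obtain ⟨b, hb⟩ := eventually_atBot.1 hbot
  obtain ⟨c, hc⟩ := eventually_atTop.1 htop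
  have hleft : volume.real (S ∩ Ioc (b - L) (b - L + L)) = 0 := by
    have hempty : S ∩ Ioc (b - L) (b - L + L) = ∅ :=
      eq_empty_of_forall_notMem fun x hx => hb x (by linarith [hx.2.2]) hx.1
    rw [hempty, measureReal_empty]
  have hright : volume.real (S ∩ Ioc (max c (b - L)) (max c (b - L) + L)) = L := by
    rw [inter_eq_right.2 fun x hx => hc x ((le_max_left _ _).trans hx.1.le),
      Real.volume_real_Ioc_of_le (by linarith [hm.1, hm.2]), add_sub_cancel_left]
  obtain ⟨x₀, -, hx₀⟩ := intermediate_value_Icc (le_max_right c (b - L))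
    (continuous_volumeReal_inter_Ioc hS (hm.1.trans hm.2)).continuousOn (by rwa [hleft, hright])
  exact ⟨x₀, by rw [← hx₀, ofReal_measureReal (measure_ne_top_of_subset inter_subset_right
    measure_Ioc_lt_top.ne)]⟩

lemma ofReal_le_gag_of_volume_preimage_Icc_lt_one {s p q : ℝ} {v : ℝ → ℝ} (hv : Measurable v)
    (hs : 0 ≤ 1 + 2 * s) (hpq : p < q) (hbot : ∀ᶠ x in atBot, v x < p)
    (htop : ∀ᶠ x in atTop, q < v x) (hmid : volume (v ⁻¹' Icc p q) < 1) :
    ENNReal.ofReal ((q - p) ^ 2 / 3 ^ (1 + 2 * s)) ≤ gag s univ v := by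
  obtain ⟨x₀, hhigh⟩ := exists_volume_inter_Ioc_eq (hv measurableSet_Ioi) (L := 3) (m := 1)
    (by norm_num) (hbot.mono fun x hx (h : q < v x) => by linarith) htop
  set W := Ioc x₀ (x₀ + 3)
  have hlow : 1 ≤ volume (v ⁻¹' Iio p ∩ W) := by
    have hcover : W ⊆ (v ⁻¹' Iio p ∩ W ∪ v ⁻¹' Icc p q) ∪ v ⁻¹' Ioi q ∩ W := fun x hx => by
      rcases lt_or_ge (v x) p with h | h
      · exact Or.inl (Or.inl ⟨h, hx⟩)
      rcases le_or_gt (v x) q with h' | h'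
      exacts [Or.inl (Or.inr ⟨h, h'⟩), Or.inr ⟨h', hx⟩]
    have h3 : (3 : ℝ≥0∞) ≤ volume (v ⁻¹' Iio p ∩ W) + volume (v ⁻¹' Icc p q) + 1 := by
      calc (3 : ℝ≥0∞) = volume W := by simp [W]
        _ ≤ _ := measure_mono hcover
        _ ≤ _ := (measure_union_le _ _).trans (add_le_add_left (measure_union_le _ _) _)
        _ = _ := by rw [← ENNReal.ofReal_one, hhigh]
    by_contra! h
    have := ENNReal.add_lt_add_right ENNReal.one_ne_top (ENNReal.add_lt_add h hmid)
    norm_num at this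
    exact this.not_ge h3
  have hgag := ofReal_mul_volume_mul_volume_le_gag (v := v) (L := 3)
    (A := v ⁻¹' Iio p ∩ W) (B := v ⁻¹' Ioi q ∩ W) hs (sub_pos.2 hpq)
    ((hv measurableSet_Iio).inter measurableSet_Ioc)
    ((hv measurableSet_Ioi).inter measurableSet_Ioc)
    (fun x hx x' hx' => abs_le.2 ⟨by linarith [hx.2.2, hx'.2.1], by linarith [hx.2.1, hx'.2.2]⟩)
    (fun x hx x' hx' => le_abs.2 (Or.inl (by
      have hlo : v x < p := hx.1
      have hhi : q < v x' := hx'.1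
      linarith)))
  rw [hhigh, ENNReal.ofReal_one, mul_one] at hgag
  exact le_mul_of_one_le_right' hlow |>.trans hgag

theorem stmt_11 (a s D α' β' : ℝ) (V : ℝ → ℝ)
    (ha : a ∈ Set.Ioo (-1 : ℝ) 0) (hs : s = (1 - a) / 2) (hD : 0 < D) (hαβ : α' < β')
    (hV0 : ∀ t, 0 ≤ V t) (hVc : Continuous V)
    (hVz : ∀ t, V t = 0 ↔ t = α' ∨ t = β') :
    0 < kappa D s α' β' V := by
  obtain ⟨-, ha0⟩ := ha
  have hs' : 0 ≤ 1 + 2 * s := by rw [hs]; linarith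
  obtain ⟨p, q, hαp, hpq, hqβ⟩ : ∃ p q, α' < p ∧ p < q ∧ q < β' :=
    ⟨(2 * α' + β') / 3, (α' + 2 * β') / 3, by linarith, by linarith, by linarith⟩
  obtain ⟨t₀, ht₀, hmin⟩ := isCompact_Icc.exists_isMinOn (nonempty_Icc.2 hpq.le) hVc.continuousOn
  have hVt₀ : 0 < V t₀ := (hV0 t₀).lt_of_ne fun h => by
    rcases (hVz t₀).1 h.symm with rfl | rfl
    exacts [by linarith [ht₀.1], by linarith [ht₀.2]]
  have hkin : 0 < ENNReal.ofReal (1 / D) * ENNReal.ofReal ((q - p) ^ 2 / 3 ^ (1 + 2 * s)) :=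
    ENNReal.mul_pos (by positivity) (by positivity)
  refine (lt_min (ENNReal.ofReal_pos.2 hVt₀) hkin).trans_le (le_sInf ?_)
  rintro _ ⟨v, hv, -, hbot, htop, rfl⟩
  rcases le_or_gt 1 (volume (v ⁻¹' Icc p q)) with hmid | hmid
  · refine (min_le_left _ _).trans (le_trans ?_ le_add_self)
    exact (le_mul_of_one_le_right' hmid).trans
      (ofReal_mul_volume_preimage_le_lintegral hVc.measurable hv fun t ht => hmin ht)
  · refine (min_le_right _ _).trans (le_trans ?_ le_self_add)
    exact mul_le_mul_right (ofReal_le_gag_of_volume_preimage_Icc_lt_one hv hs' hpq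
      (hbot.eventually_lt_const hαp) (htop.eventually_const_lt hqβ) hmid) _
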